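/- arXiv:2008.03675 — 5 statements merged into one kernel-verified Lean document; each statement's English description precedes it below -/
import Mathlib

section
/- Any 2-colored tiling of the real line into intervals each of length at most 1 has minimal same-color inter-tile distance at most 1. Equivalently, for every ε > 0 there exist two points of the same color, lying in different tiles, at distance less than 1 + ε. -/
/-- Any 2-colored tiling of the real line into closed bounded intervals of
length at most 1 (pairwise disjoint interiors, covering ℝ, locally finite) has minimal
same-color inter-tile distance at most 1: for every ε > 0 there are two points of the same
color, in different tiles, at distance less than 1 + ε. -/
theorem stmt_1 (ι : Type*) (f g : ι → ℝ)
    (hfg : ∀ i, f i ≤ g i)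
    (hlen : ∀ i, g i - f i ≤ 1)
    (hcover : ∀ x : ℝ, ∃ i, x ∈ Set.Icc (f i) (g i))
    (hdisj : ∀ i j, i ≠ j → Disjoint (Set.Ioo (f i) (g i)) (Set.Ioo (f j) (g j)))
    (hlocfin : ∀ R : ℝ, {i | (Set.Icc (f i) (g i) ∩ Set.Icc (-R) R).Nonempty}.Finite)
    (color : ι → Fin 2) :
    ∀ ε : ℝ, 0 < ε → ∃ i j, i ≠ j ∧ color i = color j ∧
      ∃ x ∈ Set.Icc (f i) (g i), ∃ y ∈ Set.Icc (f j) (g j), |x - y| < 1 + ε := by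
  intro ε hε
  -- Step 1: there is a nondegenerate tile
  have hnd : ∃ i0, f i0 < g i0 := by
    by_contra h
    push_neg at h
    have heq : ∀ i, f i = g i := fun i => le_antisymm (hfg i) (h i)
    have hsub : Set.Icc (0:ℝ) 1 ⊆
        f '' {i | (Set.Icc (f i) (g i) ∩ Set.Icc (-(1:ℝ)) 1).Nonempty} := by
      intro x hx
      obtain ⟨i, hi⟩ := hcover x
      have hx1 : x ∈ Set.Icc (-(1:ℝ)) 1 := ⟨by linarith [hx.1], hx.2⟩
      refine ⟨i, ⟨x, hi, hx1⟩, ?_⟩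
      have h1 := hi.1; have h2 := hi.2; have h3 := heq i
      linarith
    have hfin := (hlocfin 1).image f
    exact (Set.Icc_infinite (by norm_num : (0:ℝ) < 1)) (hfin.subset hsub)
  obtain ⟨i0, hi0⟩ := hnd
  set a := f i0 with ha
  set b := g i0 with hb
  set δ := min ε 1 / 3 with hδdef
  have hmin : 0 < min ε 1 := lt_min hε one_pos
  have hδpos : 0 < δ := by positivity
  have hδε : δ ≤ ε / 3 := by
    have := min_le_left ε 1
    rw [hδdef]; linarith
  obtain ⟨j, hj⟩ := hcover (b + δ)
  obtain ⟨k, hk⟩ := hcover (a - δ)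
  have hji0 : j ≠ i0 := by rintro rfl; have := hj.2; linarith
  have hki0 : k ≠ i0 := by rintro rfl; have := hk.1; linarith
  have hjk : j ≠ k := by
    rintro rfl
    have hmid : (a + b) / 2 ∈ Set.Ioo (f j) (g j) :=
      ⟨by linarith [hk.1], by linarith [hj.2]⟩
    have hmid2 : (a + b) / 2 ∈ Set.Ioo (f i0) (g i0) := ⟨by linarith, by linarith⟩
    exact Set.disjoint_left.mp (hdisj i0 j hji0.symm) hmid2 hmid
  have hleni0 := hlen i0
  by_cases h1 : color i0 = color j
  · exact ⟨i0, j, hji0.symm, h1, b, ⟨hfg i0, le_refl b⟩, b + δ, hj, by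
      have he : b - (b + δ) = -δ := by ring
      rw [he, abs_neg, abs_of_pos hδpos]; linarith⟩
  by_cases h2 : color i0 = color k
  · exact ⟨i0, k, hki0.symm, h2, a, ⟨le_refl a, hfg i0⟩, a - δ, hk, by
      have he : a - (a - δ) = δ := by ring
      rw [he, abs_of_pos hδpos]; linarith⟩
  have hc2 : ∀ c : Fin 2, c = 0 ∨ c = 1 := by decide
  have h3 : color j = color k := by
    rcases hc2 (color i0) with hA | hA <;> rcases hc2 (color j) with hB | hB <;>
      rcases hc2 (color k) with hC | hC <;> simp_all
  exact ⟨j, k, hjk, h3, b + δ, hj, a - δ, hk, by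
    have he : b + δ - (a - δ) = (b - a) + 2 * δ := by ring
    rw [abs_of_pos (by linarith : (0:ℝ) < b + δ - (a - δ)), he]
    linarith⟩
end

section
/- Let A, B be nonempty compact subsets of ℝ^d. Then λ(A+B)^{1/d} ≥ λ(A)^{1/d} + λ(B)^{1/d}, where λ is d-dimensional Lebesgue measure and A+B is the Minkowski sum. -/
/-!
Hadwiger–Ohmann argument. For two boxes the inequality is the AM–GM inequality applied to the
ratios of the side lengths. For finite unions of pairwise disjoint boxes one inducts on the total
number of boxes: if `A` has two boxes, a coordinate hyperplane `y i = x` separates them, and `B` is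
cut by a parallel hyperplane `y i = x'` in the same volume ratio `θ` (intermediate value theorem).
The lower halves and the upper halves have fewer boxes, their sums lie on opposite sides of
`y i = x + x'`, and by homogeneity the two inductive bounds add up to
`(|A|^{1/n} + |B|^{1/n})^n ≤ |A + B|`. Finally, a compact set is contained in the union of the
boxes of a fine partition that meet it, so the sum of these approximations lies in a thin closed
thickening of `A + B`, whose volume tends to that of `A + B`.
-/

open MeasureTheory Pointwise Set BoxIntegral

theorem Real.geom_mean_add_geom_mean_le {ι : Type*} [Fintype ι] [Nonempty ι] {u v : ι → ℝ}
    (hu : ∀ i, 0 ≤ u i) (hv : ∀ i, 0 ≤ v i) (huv : ∀ i, 0 < u i + v i) :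
    (∏ i, u i) ^ (Fintype.card ι : ℝ)⁻¹ + (∏ i, v i) ^ (Fintype.card ι : ℝ)⁻¹ ≤
      (∏ i, (u i + v i)) ^ (Fintype.card ι : ℝ)⁻¹ := by
  set n := Fintype.card ι
  set G := (∏ i, (u i + v i)) ^ (n : ℝ)⁻¹
  have hn : (n : ℝ) ≠ 0 := Nat.cast_ne_zero.2 Fintype.card_ne_zero
  have amgm : ∀ z : ι → ℝ, (∀ i, 0 ≤ z i) →
      (∏ i, z i) ^ (n : ℝ)⁻¹ ≤ G * ((n : ℝ)⁻¹ * ∑ i, z i / (u i + v i)) := by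
    intro z hz
    have hzw : ∀ i, 0 ≤ z i / (u i + v i) := fun i => div_nonneg (hz i) (huv i).le
    have := Real.geom_mean_le_arith_mean_weighted Finset.univ (fun _ => (n : ℝ)⁻¹)
      (fun i => z i / (u i + v i)) (fun _ _ => by positivity)
      (by simp [Finset.card_univ, n, hn]) (fun i _ => hzw i)
    rw [Real.finsetProd_rpow _ _ fun i _ => hzw i, Finset.prod_div_distrib,
      Real.div_rpow (Finset.prod_nonneg fun i _ => hz i)
        (Finset.prod_nonneg fun i _ => (huv i).le), ← Finset.mul_sum,
      div_le_iff₀ (Real.rpow_pos_of_pos (Finset.prod_pos fun i _ => huv i) _)] at this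
    linarith
  have hsum : ∑ i, (u i / (u i + v i) + v i / (u i + v i)) = n := by
    simp [← add_div, div_self (huv _).ne', n]
  calc _ ≤ G * ((n : ℝ)⁻¹ * ∑ i, u i / (u i + v i)) +
        G * ((n : ℝ)⁻¹ * ∑ i, v i / (u i + v i)) := add_le_add (amgm u hu) (amgm v hv)
    _ = G := by
      rw [← mul_add, ← mul_add, ← Finset.sum_add_distrib, hsum, inv_mul_cancel₀ hn, mul_one]

theorem Real.mul_rpow_inv_add_pow_le {n : ℕ} (hn : n ≠ 0) {t x y z : ℝ} (ht : 0 ≤ t)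
    (hx : 0 ≤ x) (hy : 0 ≤ y) (hz : 0 ≤ z)
    (h : (t * x) ^ (n⁻¹ : ℝ) + (t * y) ^ (n⁻¹ : ℝ) ≤ z ^ (n⁻¹ : ℝ)) :
    t * (x ^ (n⁻¹ : ℝ) + y ^ (n⁻¹ : ℝ)) ^ n ≤ z := by
  rw [Real.mul_rpow ht hx, Real.mul_rpow ht hy, ← mul_add] at h
  have := pow_le_pow_left₀ (by positivity) h n
  rwa [mul_pow, Real.rpow_inv_natCast_pow ht hn, Real.rpow_inv_natCast_pow hz hn] at this

namespace BoxIntegral.Box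

variable {ι : Type*}

theorem exists_upper_le_lower_of_disjoint {I J : Box ι} (h : Disjoint (I : Set (ι → ℝ)) J) :
    ∃ i, I.upper i ≤ J.lower i ∨ J.upper i ≤ I.lower i := by
  by_contra! H
  set x : ι → ℝ := fun i => min (I.upper i) (J.upper i)
  refine Set.disjoint_left.1 h (show x ∈ I from fun i => ?_) (show x ∈ J from fun i => ?_) <;>
  · have := I.lower_lt_upper i
    have := J.lower_lt_upper i
    have := H i
    constructor <;> grind

theorem pi_Ioc_add_subset (I J : Box ι) :
    (univ.pi fun i => Ioc (I.lower i + J.lower i) (I.upper i + J.upper i)) ⊆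
      (I : Set (ι → ℝ)) + (J : Set (ι → ℝ)) := by
  intro x hx
  simp only [mem_pi, mem_univ, forall_true_left, mem_Ioc] at hx
  -- `y i ∈ (I.lower i, I.upper i] ∩ [x i - J.upper i, x i - J.lower i)`
  set y : ι → ℝ := fun i => max (x i - J.upper i)
    ((I.lower i + min (I.upper i) (x i - J.lower i)) / 2)
  refine ⟨y, fun i => ?_, x - y, fun i => ?_, add_sub_cancel _ _⟩ <;>
  · have := I.lower_lt_upper i
    have := J.lower_lt_upper i
    have := hx i
    simp only [y, Pi.sub_apply, mem_Ioc]
    constructor <;> grind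

variable [Fintype ι]

theorem measureReal_coe_pos (I : Box ι) : 0 < volume.real (I : Set (ι → ℝ)) := by
  rw [measureReal_def, volume_apply']
  exact Finset.prod_pos fun i _ => sub_pos.2 (I.lower_lt_upper i)

theorem volume_add_ne_top (I J : Box ι) :
    volume ((I : Set (ι → ℝ)) + (J : Set (ι → ℝ))) ≠ ⊤ :=
  (I.isBounded.add J.isBounded).measure_lt_top.ne

theorem brunnMinkowski [Nonempty ι] (I J : Box ι) :
    volume.real (I : Set (ι → ℝ)) ^ (Fintype.card ι : ℝ)⁻¹ +
        volume.real (J : Set (ι → ℝ)) ^ (Fintype.card ι : ℝ)⁻¹ ≤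
      volume.real ((I : Set (ι → ℝ)) + (J : Set (ι → ℝ))) ^ (Fintype.card ι : ℝ)⁻¹ := by
  have hI := I.lower_lt_upper
  have hJ := J.lower_lt_upper
  have hsum := measureReal_mono (pi_Ioc_add_subset I J) (volume_add_ne_top I J)
  rw [measureReal_def, Real.volume_pi_Ioc_toReal fun i => by linarith [hI i, hJ i]] at hsum
  rw [measureReal_def, measureReal_def, volume_apply', volume_apply']
  refine (Real.geom_mean_add_geom_mean_le (fun i => by linarith [hI i])
    (fun i => by linarith [hJ i]) fun i => by linarith [hI i, hJ i]).trans
    (Real.rpow_le_rpow ?_ (le_trans (le_of_eq ?_) hsum) (by positivity))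
  · exact Finset.prod_nonneg fun i _ => by linarith [hI i, hJ i]
  · exact Finset.prod_congr rfl fun i _ => by ring

end BoxIntegral.Box

namespace BoxIntegral.Prepartition

open scoped Finset

variable {ι : Type*} {I : Box ι}

open Classical in
noncomputable def shrink (π : Prepartition I) (f : Box ι → WithBot (Box ι)) (hf : ∀ J, f J ≤ J) :
    Prepartition I :=
  ofWithBot (π.boxes.image f)
    (by
      simp only [Finset.mem_image]
      rintro _ ⟨J, hJ, rfl⟩
      exact (hf J).trans (WithBot.coe_le_coe.2 (π.le_of_mem hJ)))
    (by
      simp only [Set.Pairwise, Finset.coe_image, mem_image, Finset.mem_coe]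
      rintro _ ⟨J₁, h₁, rfl⟩ _ ⟨J₂, h₂, rfl⟩ hne
      have : J₁ ≠ J₂ := by rintro rfl; exact hne rfl
      exact (Box.disjoint_coe.2 (π.disjoint_coe_of_mem h₁ h₂ this)).mono (hf J₁) (hf J₂))

variable (π : Prepartition I) (f : Box ι → WithBot (Box ι)) (hf : ∀ J, f J ≤ J)

theorem iUnion_shrink : (π.shrink f hf).iUnion = ⋃ J ∈ π, (f J : Set (ι → ℝ)) := by
  simp [shrink, Prepartition.mem_boxes]

theorem card_shrink_le : #(π.shrink f hf).boxes ≤ #π.boxes := by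
  classical
  exact (Finset.card_eraseNone_le _).trans Finset.card_image_le

variable {π f} {J : Box ι}

theorem card_shrink_lt (hJ : J ∈ π) (h : f J = ⊥) : #(π.shrink f hf).boxes < #π.boxes := by
  classical
  have hbot : (none : Option (Box ι)) ∈ π.boxes.image f := Finset.mem_image.2 ⟨J, hJ, h⟩
  have := Finset.card_pos.2 ⟨J, hJ⟩
  have h₁ : #(π.shrink f hf).boxes = #(π.boxes.image f) - 1 :=
    Finset.card_eraseNone_of_mem hbot
  have h₂ : #(π.boxes.image f) ≤ #π.boxes := Finset.card_image_le
  omega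

theorem shrink_boxes_nonempty (hJ : J ∈ π) (h : f J ≠ ⊥) : (π.shrink f hf).boxes.Nonempty := by
  classical
  obtain ⟨K, hK⟩ := WithBot.ne_bot_iff_exists.1 h
  exact ⟨K, mem_ofWithBot.2 (Finset.mem_image.2 ⟨J, hJ, hK.symm⟩)⟩

noncomputable def splitLower (π : Prepartition I) (i : ι) (x : ℝ) : Prepartition I :=
  π.shrink (·.splitLower i x) fun J => J.splitLower_le

noncomputable def splitUpper (π : Prepartition I) (i : ι) (x : ℝ) : Prepartition I :=
  π.shrink (·.splitUpper i x) fun J => J.splitUpper_le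

theorem iUnion_splitLower (π : Prepartition I) (i : ι) (x : ℝ) :
    (π.splitLower i x).iUnion = π.iUnion ∩ {y | y i ≤ x} := by
  rw [splitLower, iUnion_shrink, iUnion_def]
  simp only [Box.coe_splitLower, iUnion_inter]

theorem iUnion_splitUpper (π : Prepartition I) (i : ι) (x : ℝ) :
    (π.splitUpper i x).iUnion = π.iUnion ∩ {y | x < y i} := by
  rw [splitUpper, iUnion_shrink, iUnion_def]
  simp only [Box.coe_splitUpper, iUnion_inter]

theorem card_splitLower_le (π : Prepartition I) (i : ι) (x : ℝ) :
    #(π.splitLower i x).boxes ≤ #π.boxes :=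
  card_shrink_le _ _ _

theorem card_splitUpper_le (π : Prepartition I) (i : ι) (x : ℝ) :
    #(π.splitUpper i x).boxes ≤ #π.boxes :=
  card_shrink_le _ _ _

theorem exists_card_splitLower_lt_card_splitUpper_lt (h : 1 < #π.boxes) :
    ∃ i x, #(π.splitLower i x).boxes < #π.boxes ∧ #(π.splitUpper i x).boxes < #π.boxes ∧
      (π.splitLower i x).boxes.Nonempty ∧ (π.splitUpper i x).boxes.Nonempty := by
  obtain ⟨J, hJ, K, hK, i, hJK⟩ : ∃ J ∈ π, ∃ K ∈ π, ∃ i, J.upper i ≤ K.lower i := by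
    obtain ⟨J, hJ, K, hK, hne⟩ := Finset.one_lt_card.1 h
    obtain ⟨i, hi | hi⟩ := Box.exists_upper_le_lower_of_disjoint (π.disjoint_coe_of_mem hJ hK hne)
    exacts [⟨J, hJ, K, hK, i, hi⟩, ⟨K, hK, J, hJ, i, hi⟩]
  exact ⟨i, J.upper i,
    card_shrink_lt _ hK (Box.splitLower_eq_bot.2 hJK),
    card_shrink_lt _ hJ (Box.splitUpper_eq_bot.2 le_rfl),
    shrink_boxes_nonempty _ hJ ((Box.splitLower_eq_self.2 le_rfl).symm ▸ WithBot.coe_ne_bot),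
    shrink_boxes_nonempty _ hK ((Box.splitUpper_eq_self.2 hJK).symm ▸ WithBot.coe_ne_bot)⟩

variable [Fintype ι]

theorem volume_iUnion_ne_top (π : Prepartition I) : volume π.iUnion ≠ ⊤ :=
  (I.isBounded.subset π.iUnion_subset).measure_lt_top.ne

theorem volume_iUnion_add_iUnion_ne_top {I' : Box ι} (π : Prepartition I)
    (π' : Prepartition I') : volume (π.iUnion + π'.iUnion) ≠ ⊤ :=
  ne_top_of_le_ne_top (I.volume_add_ne_top I')
    (measure_mono (add_subset_add π.iUnion_subset π'.iUnion_subset))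

theorem measureReal_iUnion_pos_iff (π : Prepartition I) :
    0 < volume.real π.iUnion ↔ π.boxes.Nonempty := by
  refine ⟨fun h => Finset.nonempty_iff_ne_empty.2 fun he => ?_, fun ⟨J, hJ⟩ => ?_⟩
  · simp [iUnion_def', he] at h
  · exact J.measureReal_coe_pos.trans_le
      (measureReal_mono (π.subset_iUnion hJ) π.volume_iUnion_ne_top)

end BoxIntegral.Prepartition

section HalfSpaces

variable {ι : Type*} [Fintype ι]

theorem volume_hyperplane (i : ι) (t : ℝ) : volume {y : ι → ℝ | y i = t} = 0 := by
  rw [volume_pi]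
  exact Measure.pi_eval_preimage_null (fun _ => (volume : Measure ℝ)) (measure_singleton t)

theorem measureReal_inter_le_add_inter_lt {S : Set (ι → ℝ)} (hS : volume S ≠ ⊤) (i : ι)
    (x : ℝ) :
    volume.real (S ∩ {y | y i ≤ x}) + volume.real (S ∩ {y | x < y i}) = volume.real S := by
  have : S ∩ {y | x < y i} = S \ {y | y i ≤ x} := by ext; simp
  rw [this, measureReal_inter_add_sdiff (measurableSet_le (measurable_pi_apply i)
    measurable_const) hS]

theorem continuous_measureReal_inter_le {S : Set (ι → ℝ)} (hS : volume S ≠ ⊤) (i : ι) :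
    Continuous fun t => volume.real (S ∩ {y | y i ≤ t}) := by
  have hmeas : ∀ t : ℝ, MeasurableSet {y : ι → ℝ | y i ≤ t} := fun t =>
    measurableSet_le (measurable_pi_apply i) measurable_const
  have : Fact (volume S < ⊤) := ⟨hS.lt_top⟩
  have hint : (fun t => volume.real (S ∩ {y | y i ≤ t})) =
      fun t => ∫ y in S, {y : ι → ℝ | y i ≤ t}.indicator 1 y := by
    ext t
    rw [integral_indicator_one (hmeas t), measureReal_restrict_apply (hmeas t), inter_comm]
  rw [hint, continuous_iff_continuousAt]
  intro t₀
  refine continuousAt_of_dominated (bound := 1)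
    (Filter.Eventually.of_forall fun t =>
      (measurable_const.indicator (hmeas t)).aestronglyMeasurable)
    (Filter.Eventually.of_forall fun t => Filter.Eventually.of_forall fun y => ?_)
    (integrable_const 1) ?_
  · by_cases h : y i ≤ t <;> simp [Set.indicator, h]
  -- the indicator is locally constant in `t` off the null hyperplane `{y | y i = t₀}`
  refine ae_restrict_of_ae ((measure_eq_zero_iff_ae_notMem.1 (volume_hyperplane i t₀)).mono
    fun y hy => ?_)
  rcases lt_or_gt_of_ne (hy : y i ≠ t₀) with h | h
  · refine (continuousAt_const (y := (1 : ℝ))).congr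
      ((eventually_gt_nhds h).mono fun t ht => ?_)
    simp [Set.indicator, ht.le]
  · refine (continuousAt_const (y := (0 : ℝ))).congr
      ((eventually_lt_nhds h).mono fun t ht => ?_)
    simp [Set.indicator, not_le.2 ht]

theorem exists_measureReal_inter_le_eq {S : Set (ι → ℝ)} {I : Box ι}
    (hS : S ⊆ I) (i : ι) {θ : ℝ} (hθ₀ : 0 ≤ θ) (hθ₁ : θ ≤ 1) :
    ∃ x, volume.real (S ∩ {y | y i ≤ x}) = θ * volume.real S := by
  have hfin : volume S ≠ ⊤ := (I.isBounded.subset hS).measure_lt_top.ne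
  have hlow : S ∩ {y | y i ≤ I.lower i} = ∅ :=
    eq_empty_of_forall_notMem fun y hy => not_lt.2 hy.2 (hS hy.1 i).1
  have hup : S ∩ {y | y i ≤ I.upper i} = S := inter_eq_left.2 fun y hy => (hS hy i).2
  have := intermediate_value_Icc (I.lower_le_upper i)
    (continuous_measureReal_inter_le hfin i).continuousOn
  rw [hlow, hup, measureReal_empty] at this
  obtain ⟨x, -, hx⟩ := this ⟨by positivity, mul_le_of_le_one_left measureReal_nonneg hθ₁⟩
  exact ⟨x, hx⟩

end HalfSpaces

section BrunnMinkowski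

variable {ι : Type*} [Fintype ι] [Nonempty ι]

theorem brunnMinkowski_of_halfSpaces {A B : Set (ι → ℝ)} (hA : volume A ≠ ⊤)
    (hB : volume B ≠ ⊤) (hAB : volume (A + B) ≠ ⊤) (i : ι) {x x' θ : ℝ} (hθ₀ : 0 ≤ θ)
    (hθ₁ : θ ≤ 1) (hAx : volume.real (A ∩ {y | y i ≤ x}) = θ * volume.real A)
    (hBx : volume.real (B ∩ {y | y i ≤ x'}) = θ * volume.real B)
    (hlow : volume.real (A ∩ {y | y i ≤ x}) ^ (Fintype.card ι : ℝ)⁻¹ +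
        volume.real (B ∩ {y | y i ≤ x'}) ^ (Fintype.card ι : ℝ)⁻¹ ≤
      volume.real (A ∩ {y | y i ≤ x} + B ∩ {y | y i ≤ x'}) ^ (Fintype.card ι : ℝ)⁻¹)
    (hupp : volume.real (A ∩ {y | x < y i}) ^ (Fintype.card ι : ℝ)⁻¹ +
        volume.real (B ∩ {y | x' < y i}) ^ (Fintype.card ι : ℝ)⁻¹ ≤
      volume.real (A ∩ {y | x < y i} + B ∩ {y | x' < y i}) ^ (Fintype.card ι : ℝ)⁻¹) :
    volume.real A ^ (Fintype.card ι : ℝ)⁻¹ + volume.real B ^ (Fintype.card ι : ℝ)⁻¹ ≤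
      volume.real (A + B) ^ (Fintype.card ι : ℝ)⁻¹ := by
  have hn : Fintype.card ι ≠ 0 := Fintype.card_ne_zero
  have hAx' : volume.real (A ∩ {y | x < y i}) = (1 - θ) * volume.real A := by
    linarith [measureReal_inter_le_add_inter_lt hA i x]
  have hBx' : volume.real (B ∩ {y | x' < y i}) = (1 - θ) * volume.real B := by
    linarith [measureReal_inter_le_add_inter_lt hB i x']
  have hlow' : volume.real (A ∩ {y | y i ≤ x} + B ∩ {y | y i ≤ x'}) ≤
      volume.real ((A + B) ∩ {y | y i ≤ x + x'}) := by
    refine measureReal_mono ?_ (ne_top_of_le_ne_top hAB (measure_mono inter_subset_left))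
    rintro _ ⟨a, ha, b, hb, rfl⟩
    exact ⟨add_mem_add ha.1 hb.1, show a i + b i ≤ x + x' from add_le_add ha.2 hb.2⟩
  have hupp' : volume.real (A ∩ {y | x < y i} + B ∩ {y | x' < y i}) ≤
      volume.real ((A + B) ∩ {y | x + x' < y i}) := by
    refine measureReal_mono ?_ (ne_top_of_le_ne_top hAB (measure_mono inter_subset_left))
    rintro _ ⟨a, ha, b, hb, rfl⟩
    exact ⟨add_mem_add ha.1 hb.1, show x + x' < a i + b i from add_lt_add ha.2 hb.2⟩
  rw [hAx, hBx] at hlow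
  rw [hAx', hBx'] at hupp
  have h₁ := Real.mul_rpow_inv_add_pow_le hn hθ₀ measureReal_nonneg measureReal_nonneg
    measureReal_nonneg hlow
  have h₂ := Real.mul_rpow_inv_add_pow_le hn (sub_nonneg.2 hθ₁) measureReal_nonneg
    measureReal_nonneg measureReal_nonneg hupp
  rw [Real.le_rpow_inv_iff_of_pos (by positivity) measureReal_nonneg (by positivity),
    Real.rpow_natCast]
  linarith [measureReal_inter_le_add_inter_lt hAB i (x + x')]

end BrunnMinkowski

namespace BoxIntegral.Prepartition

open scoped Finset

variable {ι : Type*} [Fintype ι] [Nonempty ι] {I I' : Box ι}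

theorem brunnMinkowski_of_one_lt_card {π : Prepartition I} {π' : Prepartition I'}
    (hπ : 1 < #π.boxes) (hπ' : π'.boxes.Nonempty)
    (ih : ∀ (σ : Prepartition I) (σ' : Prepartition I'),
      #σ.boxes + #σ'.boxes < #π.boxes + #π'.boxes → σ.boxes.Nonempty → σ'.boxes.Nonempty →
      volume.real σ.iUnion ^ (Fintype.card ι : ℝ)⁻¹ +
          volume.real σ'.iUnion ^ (Fintype.card ι : ℝ)⁻¹ ≤
        volume.real (σ.iUnion + σ'.iUnion) ^ (Fintype.card ι : ℝ)⁻¹) :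
    volume.real π.iUnion ^ (Fintype.card ι : ℝ)⁻¹ +
        volume.real π'.iUnion ^ (Fintype.card ι : ℝ)⁻¹ ≤
      volume.real (π.iUnion + π'.iUnion) ^ (Fintype.card ι : ℝ)⁻¹ := by
  obtain ⟨i, x, hlow, hupp, hlowne, huppne⟩ :=
    π.exists_card_splitLower_lt_card_splitUpper_lt hπ
  have hpos := (measureReal_iUnion_pos_iff π).2 (Finset.card_pos.1 (by omega))
  have hlowpos := (measureReal_iUnion_pos_iff _).2 hlowne
  have hupppos := (measureReal_iUnion_pos_iff _).2 huppne
  have hsplit := measureReal_inter_le_add_inter_lt π.volume_iUnion_ne_top i x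
  rw [← iUnion_splitLower, ← iUnion_splitUpper] at hsplit
  set θ := volume.real (π.splitLower i x).iUnion / volume.real π.iUnion
  have hθ₀ : 0 < θ := div_pos hlowpos hpos
  have hθ₁ : θ < 1 := (div_lt_one hpos).2 (by linarith)
  have hAx : volume.real (π.iUnion ∩ {y | y i ≤ x}) = θ * volume.real π.iUnion := by
    rw [← iUnion_splitLower, div_mul_cancel₀ _ hpos.ne']
  obtain ⟨x', hBx⟩ := exists_measureReal_inter_le_eq π'.iUnion_subset i hθ₀.le hθ₁.le
  have hpos' := (measureReal_iUnion_pos_iff π').2 hπ'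
  have hsplit' := measureReal_inter_le_add_inter_lt π'.volume_iUnion_ne_top i x'
  have hlowne' : (π'.splitLower i x').boxes.Nonempty := by
    rw [← measureReal_iUnion_pos_iff, iUnion_splitLower, hBx]
    positivity
  have huppne' : (π'.splitUpper i x').boxes.Nonempty := by
    rw [← measureReal_iUnion_pos_iff, iUnion_splitUpper]
    nlinarith
  have hcard_low := π'.card_splitLower_le i x'
  have hcard_upp := π'.card_splitUpper_le i x'
  refine brunnMinkowski_of_halfSpaces π.volume_iUnion_ne_top π'.volume_iUnion_ne_top
    (volume_iUnion_add_iUnion_ne_top π π') i hθ₀.le hθ₁.le hAx hBx ?_ ?_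
  · rw [← iUnion_splitLower, ← iUnion_splitLower]
    exact ih _ _ (by omega) hlowne hlowne'
  · rw [← iUnion_splitUpper, ← iUnion_splitUpper]
    exact ih _ _ (by omega) huppne huppne'

theorem brunnMinkowski (π : Prepartition I) (π' : Prepartition I') (hπ : π.boxes.Nonempty)
    (hπ' : π'.boxes.Nonempty) :
    volume.real π.iUnion ^ (Fintype.card ι : ℝ)⁻¹ +
        volume.real π'.iUnion ^ (Fintype.card ι : ℝ)⁻¹ ≤
      volume.real (π.iUnion + π'.iUnion) ^ (Fintype.card ι : ℝ)⁻¹ := by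
  induction hN : #π.boxes + #π'.boxes using Nat.strong_induction_on generalizing I I' with
  | _ N ih =>
  rcases lt_or_ge 1 #π.boxes with h | h
  · exact brunnMinkowski_of_one_lt_card h hπ' fun σ σ' hlt hσ hσ' =>
      ih _ (hN ▸ hlt) σ σ' hσ hσ' rfl
  rcases lt_or_ge 1 #π'.boxes with h' | h'
  · rw [add_comm, add_comm π.iUnion]
    exact brunnMinkowski_of_one_lt_card h' hπ fun σ σ' hlt hσ hσ' =>
      ih _ (by omega) σ σ' hσ hσ' rfl
  obtain ⟨J, hJ⟩ := Finset.card_eq_one.1 (le_antisymm h hπ.card_pos)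
  obtain ⟨J', hJ'⟩ := Finset.card_eq_one.1 (le_antisymm h' hπ'.card_pos)
  simp only [iUnion_def', hJ, hJ', Finset.mem_singleton, iUnion_iUnion_eq_left]
  exact J.brunnMinkowski J'

end BoxIntegral.Prepartition

section Approximation

variable {ι : Type*} [Fintype ι]

theorem Bornology.IsBounded.exists_subset_box {A : Set (ι → ℝ)} (hA : Bornology.IsBounded A) :
    ∃ I : Box ι, A ⊆ I := by
  obtain ⟨r, hr⟩ := hA.subset_closedBall 0
  refine ⟨⟨fun _ => -(|r| + 1), fun _ => |r| + 1, fun _ => by linarith [abs_nonneg r]⟩,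
    fun x hx i => ?_⟩
  have := (norm_le_pi_norm x i).trans (mem_closedBall_zero_iff.1 (hr hx))
  rw [Real.norm_eq_abs] at this
  constructor <;> linarith [neg_abs_le (x i), le_abs_self (x i), le_abs_self r]

theorem IsCompact.exists_prepartition_subset_add_closedBall {A : Set (ι → ℝ)}
    (hA : IsCompact A) {ε : ℝ} (hε : 0 < ε) :
    ∃ (I : Box ι) (π : Prepartition I),
      A ⊆ π.iUnion ∧ π.iUnion ⊆ A + Metric.closedBall 0 ε := by
  obtain ⟨I, hAI⟩ := hA.isBounded.exists_subset_box
  obtain ⟨π, hπ, -, hsub, -⟩ :=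
    I.exists_taggedPartition_isHenstock_isSubordinate_homothetic fun _ => ⟨ε / 2, half_pos hε⟩
  refine ⟨I, π.toPrepartition.filter fun J => ((J : Set (ι → ℝ)) ∩ A).Nonempty,
    fun x hx => ?_, fun y hy => ?_⟩
  · obtain ⟨J, hJ, hxJ⟩ := hπ x (hAI hx)
    exact (Prepartition.mem_iUnion _).2
      ⟨J, (Prepartition.mem_filter _).2 ⟨hJ, x, hxJ, hx⟩, hxJ⟩
  · obtain ⟨J, hJ, hyJ⟩ := (Prepartition.mem_iUnion _).1 hy
    obtain ⟨hJπ, x, hxJ, hxA⟩ := (Prepartition.mem_filter _).1 hJ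
    have hy' := Metric.mem_closedBall.1 (hsub J hJπ (J.coe_subset_Icc hyJ))
    have hx' := Metric.mem_closedBall.1 (hsub J hJπ (J.coe_subset_Icc hxJ))
    have hxy : dist y x ≤ ε := by linarith [dist_triangle_right y x (π.tag J)]
    exact ⟨x, hxA, y - x, mem_closedBall_zero_iff.2 (dist_eq_norm y x ▸ hxy),
      add_sub_cancel _ _⟩

end Approximation

open Filter Topology in
theorem brunnMinkowski_of_isCompact {ι : Type*} [Fintype ι] [Nonempty ι] {A B : Set (ι → ℝ)}
    (hA : IsCompact A) (hB : IsCompact B) (hAne : A.Nonempty) (hBne : B.Nonempty) :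
    volume.real A ^ (Fintype.card ι : ℝ)⁻¹ + volume.real B ^ (Fintype.card ι : ℝ)⁻¹ ≤
      volume.real (A + B) ^ (Fintype.card ι : ℝ)⁻¹ := by
  have hAB := hA.add hB
  have hlim : Tendsto
      (fun r => volume.real (Metric.cthickening r (A + B)) ^ (Fintype.card ι : ℝ)⁻¹)
      (𝓝[>] 0) (𝓝 (volume.real (A + B) ^ (Fintype.card ι : ℝ)⁻¹)) :=
    (((ENNReal.tendsto_toReal hAB.measure_lt_top.ne).comp
      (tendsto_measure_cthickening_of_isCompact hAB)).rpow_const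
        (Or.inr (by positivity))).mono_left nhdsWithin_le_nhds
  refine ge_of_tendsto hlim (eventually_nhdsWithin_of_forall fun r (hr : 0 < r) => ?_)
  obtain ⟨I, π, hAπ, hπA⟩ := hA.exists_prepartition_subset_add_closedBall (half_pos hr)
  obtain ⟨I', π', hBπ', hπ'B⟩ := hB.exists_prepartition_subset_add_closedBall (half_pos hr)
  have hsum : π.iUnion + π'.iUnion ⊆ Metric.cthickening r (A + B) := by
    have hball : Metric.closedBall (0 : ι → ℝ) (r / 2) + Metric.closedBall 0 (r / 2) =
        Metric.closedBall 0 r := by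
      rw [closedBall_add_closedBall (half_pos hr).le (half_pos hr).le, add_zero, add_halves]
    rw [← hAB.add_closedBall_zero hr.le, ← hball, add_add_add_comm]
    exact add_subset_add hπA hπ'B
  obtain ⟨J, hJ, -⟩ := (π.mem_iUnion).1 (hAπ hAne.some_mem)
  obtain ⟨J', hJ', -⟩ := (π'.mem_iUnion).1 (hBπ' hBne.some_mem)
  calc _ ≤ volume.real π.iUnion ^ (Fintype.card ι : ℝ)⁻¹ +
        volume.real π'.iUnion ^ (Fintype.card ι : ℝ)⁻¹ := by
        gcongr
        · exact π.volume_iUnion_ne_top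
        · exact π'.volume_iUnion_ne_top
    _ ≤ volume.real (π.iUnion + π'.iUnion) ^ (Fintype.card ι : ℝ)⁻¹ :=
        π.brunnMinkowski π' ⟨J, hJ⟩ ⟨J', hJ'⟩
    _ ≤ _ := by
        gcongr
        exact hAB.cthickening.measure_lt_top.ne

/-- Brunn–Minkowski: for nonempty compact A, B ⊆ ℝ^d,
λ(A+B)^{1/d} ≥ λ(A)^{1/d} + λ(B)^{1/d}. -/
theorem stmt_3 (d : ℕ) (hd : 0 < d) (A B : Set (EuclideanSpace ℝ (Fin d)))
    (hA : IsCompact A) (hB : IsCompact B) (hAne : A.Nonempty) (hBne : B.Nonempty) :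
    (volume A).toReal ^ ((1 : ℝ) / d) + (volume B).toReal ^ ((1 : ℝ) / d) ≤
      (volume (A + B)).toReal ^ ((1 : ℝ) / d) := by
  have : Nonempty (Fin d) := ⟨⟨0, hd⟩⟩
  set e := EuclideanSpace.equiv (Fin d) ℝ
  have he : ∀ S, volume.real (e '' S) = volume.real S := fun S => by
    rw [measureReal_def, measureReal_def, e.image_eq_preimage_symm]
    exact congrArg ENNReal.toReal ((EuclideanSpace.volume_preserving_symm_measurableEquiv_toLp
      _).symm.measure_preimage_equiv S)
  have := brunnMinkowski_of_isCompact (hA.image e.continuous) (hB.image e.continuous)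
    (hAne.image e) (hBne.image e)
  rwa [← Set.image_add, he, he, he, Fintype.card_fin, ← one_div] at this
end

section
/- In the brick wall tiling of ℝ² with k colors (k ≥ 3), where each tile is an axis-parallel rectangle of width √(2/(k−2)) and height √((k−2)/2), arranged in rows of adjacent rectangles colored in round-robin fashion (with the second row shifted by half a brick for odd k, or colored with a shift of k/2 for even k), the minimal Euclidean distance between two same-colored points lying in different tiles equals √((k−2)/2). -/
/-- The width of a brick in the brick wall construction with `k` colors. -/
noncomputable def brickWidth (k : ℕ) : ℝ := Real.sqrt (2 / ((k : ℝ) - 2))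

/-- The height of a brick in the brick wall construction with `k` colors. -/
noncomputable def brickHeight (k : ℕ) : ℝ := Real.sqrt (((k : ℝ) - 2) / 2)

/-- Horizontal offset of row `r`: odd rows are indented by half a brick when `k` is odd. -/
noncomputable def brickOffset (k : ℕ) (r : ℤ) : ℝ :=
  if k % 2 = 1 ∧ r % 2 = 1 then brickWidth k / 2 else 0

/-- The brick in row `r`, column `c`: an axis-parallel rectangle of width `brickWidth k`
and height `brickHeight k`. -/
noncomputable def brick (k : ℕ) (r c : ℤ) : Set (EuclideanSpace ℝ (Fin 2)) :=
  {x | x 0 ∈ Set.Icc ((c : ℝ) * brickWidth k + brickOffset k r)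
          (((c : ℝ) + 1) * brickWidth k + brickOffset k r) ∧
       x 1 ∈ Set.Icc ((r : ℝ) * brickHeight k) (((r : ℝ) + 1) * brickHeight k)}

/-- Round-robin coloring: colors are assigned cyclically along each row, and the color
sequence of odd rows is shifted by `k/2` (k even) or `(k+1)/2` (k odd). -/
def brickColor (k : ℕ) (r c : ℤ) : ZMod k :=
  (c : ZMod k) + (if r % 2 = 1 then ((if k % 2 = 0 then k / 2 else (k + 1) / 2 : ℕ) : ZMod k) else 0)

/-!
Two same-coloured bricks are either at least two rows apart, and then separated vertically by a
full brick height `h`, or their left edges are at least `k` half-bricks apart, and then separated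
horizontally by at least `k w / 2 - w = h`, where `w` is the brick width. For bricks in one row
this holds because their columns agree modulo `k`. For bricks in rows of different parity, the
colour shift `s` of odd rows satisfies `2 s = k` (k even) or `2 s = k + 1` with a half-brick
indent (k odd), so their left edges differ by an odd multiple of `k` half-bricks. Two bricks in
the same column two rows apart realise the distance `h`.
-/

lemma abs_sub_apply_le_dist {ι : Type*} [Fintype ι] (x y : EuclideanSpace ℝ ι) (i : ι) :
    |x i - y i| ≤ dist x y :=
  Real.dist_eq (x i) (y i) ▸ PiLp.dist_apply_le x y i

lemma abs_sub_sub_le_abs_sub {a b u v w : ℝ} (hau : a ≤ u) (hua : u ≤ a + w) (hbv : b ≤ v)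
    (hvb : v ≤ b + w) : |a - b| - w ≤ |u - v| := by
  rcases le_total b a with h | h
  · rw [abs_of_nonneg (sub_nonneg.2 h)]; linarith [le_abs_self (u - v)]
  · rw [abs_of_nonpos (sub_nonpos.2 h)]; linarith [neg_abs_le (u - v)]

lemma brickWidth_add_brickHeight {k : ℕ} (hk : 2 < k) :
    brickWidth k + brickHeight k = k / 2 * brickWidth k := by
  have hk2 : (0 : ℝ) < k - 2 := by
    rw [sub_pos]; exact_mod_cast hk
  have hheight : brickHeight k = (k - 2) / 2 * brickWidth k := by
    have hsq : ((k : ℝ) - 2) / 2 = ((k - 2) / 2) ^ 2 * (2 / (k - 2)) := by field_simp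
    rw [brickHeight, brickWidth]
    conv_lhs => rw [hsq, Real.sqrt_mul (by positivity), Real.sqrt_sq (by positivity)]
  rw [hheight]
  ring

lemma brickHeight_le_dist_of_add_two_le {k : ℕ} {r c r' c' : ℤ} (hr : r + 2 ≤ r')
    {x y : EuclideanSpace ℝ (Fin 2)} (hx : x ∈ brick k r c) (hy : y ∈ brick k r' c') :
    brickHeight k ≤ dist x y := by
  have hh : 0 ≤ brickHeight k := Real.sqrt_nonneg _
  have hr' : (r : ℝ) + 2 ≤ r' := by exact_mod_cast hr
  have hgap : brickHeight k ≤ y 1 - x 1 := by nlinarith [hx.2.2, hy.2.1]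
  exact hgap.trans ((le_abs_self _).trans (dist_comm x y ▸ abs_sub_apply_le_dist y x 1))

/-- The left edge of a brick, measured in half brick widths. -/
def brickLeftIndex (k : ℕ) (r c : ℤ) : ℤ :=
  2 * c + if k % 2 = 1 ∧ r % 2 = 1 then 1 else 0

lemma brickLeftIndex_mul_halfWidth (k : ℕ) (r c : ℤ) :
    (brickLeftIndex k r c : ℝ) * (brickWidth k / 2) = c * brickWidth k + brickOffset k r := by
  unfold brickLeftIndex brickOffset
  split_ifs <;> push_cast <;> ring

lemma brickHeight_le_dist_of_le_abs_brickLeftIndex_sub {k : ℕ} (hk : 2 < k) {r c r' c' : ℤ}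
    (hsep : (k : ℤ) ≤ |brickLeftIndex k r c - brickLeftIndex k r' c'|)
    {x y : EuclideanSpace ℝ (Fin 2)} (hx : x ∈ brick k r c) (hy : y ∈ brick k r' c') :
    brickHeight k ≤ dist x y := by
  have hw : 0 ≤ brickWidth k := Real.sqrt_nonneg _
  have hsep' : (k : ℝ) ≤ |(brickLeftIndex k r c : ℝ) - brickLeftIndex k r' c'| := by
    exact_mod_cast hsep
  have hedges : (k : ℝ) * (brickWidth k / 2) ≤
      |(c * brickWidth k + brickOffset k r) - (c' * brickWidth k + brickOffset k r')| := by
    rw [← brickLeftIndex_mul_halfWidth, ← brickLeftIndex_mul_halfWidth, ← sub_mul, abs_mul,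
      abs_of_nonneg (by positivity : 0 ≤ brickWidth k / 2)]
    gcongr
  have hgap := abs_sub_sub_le_abs_sub (w := brickWidth k) hx.1.1 (by linarith [hx.1.2]) hy.1.1
    (by linarith [hy.1.2])
  linarith [brickWidth_add_brickHeight hk, abs_sub_apply_le_dist x y 0]

lemma le_abs_brickLeftIndex_sub_of_brickColor_eq_same_row {k : ℕ} {r c c' : ℤ} (hc : c ≠ c')
    (hcol : brickColor k r c = brickColor k r c') :
    (k : ℤ) ≤ |brickLeftIndex k r c - brickLeftIndex k r c'| := by
  have hdvd : (k : ℤ) ∣ c - c' := by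
    rw [← ZMod.intCast_eq_intCast_iff_dvd_sub]
    simpa [brickColor] using hcol.symm
  obtain ⟨m, hm⟩ := hdvd
  have hm0 : m ≠ 0 := by rintro rfl; omega
  have hdiff : brickLeftIndex k r c - brickLeftIndex k r c' = k * (2 * m) := by
    unfold brickLeftIndex; linear_combination 2 * hm
  rw [hdiff, abs_mul, Int.abs_natCast]
  exact le_mul_of_one_le_right (by positivity) (Int.one_le_abs (by omega))

lemma le_abs_brickLeftIndex_sub_of_brickColor_eq_of_even_of_odd {k : ℕ} {r c r' c' : ℤ}
    (hr : r % 2 = 0) (hr' : r' % 2 = 1) (hcol : brickColor k r c = brickColor k r' c') :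
    (k : ℤ) ≤ |brickLeftIndex k r c - brickLeftIndex k r' c'| := by
  set s : ℕ := if k % 2 = 0 then k / 2 else (k + 1) / 2 with hs
  have hdvd : (k : ℤ) ∣ c - (c' + s) := by
    rw [← ZMod.intCast_eq_intCast_iff_dvd_sub, Int.cast_add, Int.cast_natCast]
    simpa only [brickColor, hr, hr', Int.zero_ne_one, if_true, if_false, add_zero] using hcol.symm
  obtain ⟨m, hm⟩ := hdvd
  have hshift : 2 * (s : ℤ) = k + if k % 2 = 1 then 1 else 0 := by
    split_ifs at hs ⊢ <;> omega
  have hdiff : brickLeftIndex k r c - brickLeftIndex k r' c' = k * (2 * m + 1) := by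
    simp only [brickLeftIndex, hr, hr', and_true, zero_ne_one, and_false, if_false]
    linear_combination 2 * hm + hshift
  rw [hdiff, abs_mul, Int.abs_natCast]
  exact le_mul_of_one_le_right (by positivity) (Int.one_le_abs (by omega))

lemma brickHeight_le_dist_of_brickColor_eq {k : ℕ} (hk : 2 < k) {r c r' c' : ℤ}
    (hne : (r, c) ≠ (r', c')) (hcol : brickColor k r c = brickColor k r' c')
    {x y : EuclideanSpace ℝ (Fin 2)} (hx : x ∈ brick k r c) (hy : y ∈ brick k r' c') :
    brickHeight k ≤ dist x y := by
  by_cases hrr : r = r'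
  · subst hrr
    have hc : c ≠ c' := fun h ↦ hne (by rw [h])
    exact brickHeight_le_dist_of_le_abs_brickLeftIndex_sub hk
      (le_abs_brickLeftIndex_sub_of_brickColor_eq_same_row hc hcol) hx hy
  by_cases hpar : r % 2 = r' % 2
  · rcases (by omega : r + 2 ≤ r' ∨ r' + 2 ≤ r) with h | h
    · exact brickHeight_le_dist_of_add_two_le h hx hy
    · exact dist_comm x y ▸ brickHeight_le_dist_of_add_two_le h hy hx
  rcases Int.emod_two_eq r with hr | hr
  · exact brickHeight_le_dist_of_le_abs_brickLeftIndex_sub hk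
      (le_abs_brickLeftIndex_sub_of_brickColor_eq_of_even_of_odd hr (by omega) hcol) hx hy
  · refine dist_comm x y ▸ brickHeight_le_dist_of_le_abs_brickLeftIndex_sub hk ?_ hy hx
    exact le_abs_brickLeftIndex_sub_of_brickColor_eq_of_even_of_odd (by omega) hr hcol.symm

/-- In the brick wall tiling of ℝ² with k ≥ 3 colors, the minimal Euclidean
distance between two same-colored points lying in different tiles equals √((k−2)/2). -/
theorem stmt_5 (k : ℕ) (hk : 3 ≤ k) :
    IsLeast {d : ℝ | ∃ r c r' c' : ℤ, (r, c) ≠ (r', c') ∧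
        brickColor k r c = brickColor k r' c' ∧
        ∃ x ∈ brick k r c, ∃ y ∈ brick k r' c', d = dist x y}
      (Real.sqrt (((k : ℝ) - 2) / 2)) := by
  have hw : 0 ≤ brickWidth k := Real.sqrt_nonneg _
  have hh : 0 ≤ brickHeight k := Real.sqrt_nonneg _
  refine ⟨⟨2, 0, 0, 0, by simp, by simp [brickColor], !₂[0, 2 * brickHeight k], ?_,
    !₂[0, brickHeight k], ?_, ?_⟩, ?_⟩
  · simp [brick, brickOffset, hw]
    linarith
  · simp [brick, brickOffset, hw, hh]
  · change brickHeight k = _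
    simp [EuclideanSpace.dist_eq, Real.dist_eq, two_mul, Real.sqrt_sq hh]
  · rintro d ⟨r, c, r', c', hne, hcol, x, hx, y, hy, rfl⟩
    exact brickHeight_le_dist_of_brickColor_eq hk hne hcol hx hy
end

section
/- Any 2-colored tiling of ℝ (with closed bounded intervals of length at most 1 as tiles) achieving fault tolerance r must satisfy r ≤ 1/2. Formally: if for every pair of points x, y of the same color in different tiles |x − y| ≥ 2r, then r ≤ 1/2. -/
/-- Any 2-colored tiling of ℝ by closed bounded intervals of length at most 1
(disjoint interiors, covering ℝ, locally finite) achieving fault tolerance r — i.e. any two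
same-colored points in different tiles are at distance at least 2r — satisfies r ≤ 1/2. -/
theorem stmt_8 (ι : Type*) (f g : ι → ℝ)
    (hfg : ∀ i, f i ≤ g i)
    (hlen : ∀ i, g i - f i ≤ 1)
    (hcover : ∀ x : ℝ, ∃ i, x ∈ Set.Icc (f i) (g i))
    (hdisj : ∀ i j, i ≠ j → Disjoint (Set.Ioo (f i) (g i)) (Set.Ioo (f j) (g j)))
    (hlocfin : ∀ R : ℝ, {i | (Set.Icc (f i) (g i) ∩ Set.Icc (-R) R).Nonempty}.Finite)
    (color : ι → Fin 2) (r : ℝ)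
    (hft : ∀ i j, i ≠ j → color i = color j →
      ∀ x ∈ Set.Icc (f i) (g i), ∀ y ∈ Set.Icc (f j) (g j), 2 * r ≤ |x - y|) :
    r ≤ 1 / 2 := by
  have key : ∀ ε : ℝ, 0 < ε → 2 * r ≤ 1 + 2 * ε := by
    intro ε hε
    obtain ⟨i, hi⟩ := hcover 0
    obtain ⟨j, hj⟩ := hcover (g i + ε)
    obtain ⟨k, hk⟩ := hcover (f i - ε)
    have hji : j ≠ i := by
      intro h; subst h; have := hj.2; linarith
    have hki : k ≠ i := by
      intro h; subst h; have := hk.1; linarith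
    by_cases hjk : j = k
    · -- j = k : tile j contains both f i - ε and g i + ε
      subst hjk
      by_cases hc : color i = color j
      · have h2 := hft i j (Ne.symm hji) hc (g i) ⟨hfg i, le_rfl⟩ (g i + ε) hj
        have : |g i - (g i + ε)| = ε := by
          rw [abs_sub_comm, abs_of_nonneg (by linarith)]; ring
        linarith [h2, this ▸ h2]
      · obtain ⟨l, hl⟩ := hcover (g j + ε)
        have hlj : l ≠ j := by
          intro h; subst h; have := hl.2; linarith
        have hli : l ≠ i := by
          intro h
          subst h
          have h1 : g j + ε ≤ g l := hl.2
          have h2 : g l + ε ≤ g j := hj.2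
          linarith
        have hcol : color l = color i ∨ color l = color j := by
          have : ∀ a b c : Fin 2, a ≠ b → c = a ∨ c = b := by decide
          exact this _ _ _ hc
        rcases hcol with hcl | hcl
        · have h2 := hft l i hli hcl (g j + ε) hl (g i) ⟨hfg i, le_rfl⟩
          have habs : |g j + ε - g i| = g j + ε - g i := by
            have := hj.2
            rw [abs_of_nonneg (by linarith)]
          rw [habs] at h2
          have h3 : g j ≤ f j + 1 := by linarith [hlen j]
          have h4 : f j ≤ f i - ε := hk.1
          linarith [hfg i]
        · have h2 := hft l j hlj hcl (g j + ε) hl (g j) ⟨hfg j, le_rfl⟩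
          have habs : |g j + ε - g j| = ε := by
            rw [abs_of_nonneg (by linarith)]; ring
          rw [habs] at h2
          linarith
    · -- i, j, k pairwise distinct
      by_cases h12 : color i = color j
      · have h2 := hft i j (Ne.symm hji) h12 (g i) ⟨hfg i, le_rfl⟩ (g i + ε) hj
        have habs : |g i - (g i + ε)| = ε := by
          rw [abs_sub_comm, abs_of_nonneg (by linarith)]; ring
        rw [habs] at h2; linarith
      · by_cases h13 : color i = color k
        · have h2 := hft i k (Ne.symm hki) h13 (g i) ⟨hfg i, le_rfl⟩ (f i - ε) hk
          have habs : |g i - (f i - ε)| = g i - f i + ε := by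
            rw [abs_of_nonneg (by linarith [hfg i])]; ring
          rw [habs] at h2
          linarith [hlen i]
        · have h23 : color j = color k := by
            have : ∀ a b c : Fin 2, a ≠ b → a ≠ c → b = c := by decide
            exact this _ _ _ h12 h13
          have h2 := hft j k hjk h23 (g i + ε) hj (f i - ε) hk
          have habs : |g i + ε - (f i - ε)| = g i - f i + 2 * ε := by
            rw [abs_of_nonneg (by linarith [hfg i])]; ring
          rw [habs] at h2
          linarith [hlen i]
  have h1 : 2 * r ≤ 1 := by
    apply le_of_forall_pos_le_add
    intro δ hδ
    have := key (δ / 2) (by linarith)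
    linarith
  linarith
end

section
/- For the L∞ metric in ℝ^d with k = m^d colors (m ≥ 2 an integer), the periodic tiling whose basic unit is a cube of side m partitioned into m^d unit-cube tiles, each colored with a distinct color, achieves minimal L∞ distance m−1 between same-colored points in different tiles, hence L∞ fault tolerance (m−1)/2; moreover no tiling of ℝ^d with k = m^d colors and tiles of volume at most 1 achieves L∞ fault tolerance greater than (m−1)/2. -/
open MeasureTheory

/-- The closed axis-parallel unit cube in ℝ^d (with the sup metric, i.e. `Fin d → ℝ`)
with lower corner `z ∈ ℤ^d`. -/
def intUnitCube (d : ℕ) (z : Fin d → ℤ) : Set (Fin d → ℝ) :=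
  {x | ∀ i, x i ∈ Set.Icc (z i : ℝ) ((z i : ℝ) + 1)}

/-- The periodic coloring with m^d colors: each cube is colored by its corner reduced
mod m in every coordinate, so within each m×⋯×m block every color appears exactly once. -/
def cubeColor (d m : ℕ) (z : Fin d → ℤ) : Fin d → ZMod m := fun i => (z i : ZMod m)

/-!
For the periodic colouring, two distinct cubes of the same colour have corners differing by a
nonzero multiple of `m` in some coordinate, which gives the lower bound `m - 1`; it is attained
by the cubes with corners `0` and `(m, …, m)`.

For the upper bound, intersect the tiles with a large cube `[0, n]ᵈ` and inflate each piece `A` by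
the cube `[0, b)ᵈ`, where `m - 1 < b < 2r`. Tiles of the same colour are `2r` apart, so their
inflations are disjoint, while Brunn–Minkowski gives
`vol (A + [0, b)ᵈ) ≥ (vol A ^ (1/d) + b) ^ d ≥ (1 + b) ^ d * vol A` since `vol A ≤ 1`.
Summing over the `m ^ d` colour classes, `(1 + b) ^ d * n ^ d ≤ m ^ d * (n + O(1)) ^ d`, so
`1 + b ≤ m` as `n → ∞`. Brunn–Minkowski is only needed for a finite union of grid cells plus a
box, where the Hadwiger–Ohmann induction works: cut the cells along a grid hyperplane and the box
in the same volume ratio.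
-/

open Set Metric Filter Topology Finset
open scoped Pointwise ENNReal

lemma Set.univ_pi_add_univ_pi {ι : Type*} {α : ι → Type*} [∀ i, Add (α i)]
    (s t : ∀ i, Set (α i)) : univ.pi s + univ.pi t = univ.pi fun i => s i + t i := by
  ext x
  simp only [mem_add, mem_univ_pi]
  constructor
  · rintro ⟨u, hu, v, hv, rfl⟩ i
    exact ⟨u i, hu i, v i, hv i, rfl⟩
  · intro h
    choose u hu v hv huv using h
    exact ⟨u, hu, v, hv, funext huv⟩

lemma Set.Ico_add_Ico {𝕜 : Type*} [Field 𝕜] [LinearOrder 𝕜] [IsStrictOrderedRing 𝕜]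
    {a b c d : 𝕜} (hab : a < b) (hcd : c < d) : Ico a b + Ico c d = Ico (a + c) (b + d) := by
  refine Subset.antisymm ?_ fun x ⟨hx₁, hx₂⟩ => ?_
  · rintro _ ⟨u, ⟨hu₁, hu₂⟩, v, ⟨hv₁, hv₂⟩, rfl⟩
    exact ⟨add_le_add hu₁ hv₁, add_lt_add hu₂ hv₂⟩
  rcases lt_or_ge (x - c) b with h | h
  · exact ⟨x - c, ⟨by linarith, h⟩, c, ⟨le_rfl, hcd⟩, by ring⟩
  · obtain ⟨m, ham, hdm, hmb⟩ : ∃ m, a ≤ m ∧ x - d ≤ m ∧ m < b :=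
      ⟨max a (x - d), le_max_left .., le_max_right .., max_lt hab (by linarith)⟩
    refine ⟨(m + b) / 2, ⟨by linarith, by linarith⟩, x - (m + b) / 2, ⟨by linarith, by linarith⟩,
      by ring⟩

theorem Real.prod_rpow_inv_add_prod_rpow_inv_le {ι : Type*} [Fintype ι] [Nonempty ι]
    {u v : ι → ℝ} (hu : ∀ i, 0 < u i) (hv : ∀ i, 0 < v i) :
    (∏ i, u i) ^ (Fintype.card ι : ℝ)⁻¹ + (∏ i, v i) ^ (Fintype.card ι : ℝ)⁻¹ ≤
      (∏ i, (u i + v i)) ^ (Fintype.card ι : ℝ)⁻¹ := by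
  set n : ℝ := (Fintype.card ι : ℝ)
  have hn : 0 < n := by positivity
  have huv i : 0 < u i + v i := add_pos (hu i) (hv i)
  have amgm (x : ι → ℝ) (hx : ∀ i, 0 ≤ x i) : (∏ i, x i) ^ n⁻¹ ≤ (∑ i, x i) / n := by
    simpa [n] using Real.geom_mean_le_arith_mean univ 1 x (by simp)
      (by simpa using Fintype.card_pos) fun i _ => hx i
  have factor (x : ι → ℝ) (hx : ∀ i, 0 ≤ x i) :
      (∏ i, x i) ^ n⁻¹ = (∏ i, x i / (u i + v i)) ^ n⁻¹ * (∏ i, (u i + v i)) ^ n⁻¹ := by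
    rw [← Real.mul_rpow (prod_nonneg fun i _ => div_nonneg (hx i) (huv i).le)
      (prod_nonneg fun i _ => (huv i).le), ← prod_mul_distrib]
    simp_rw [div_mul_cancel₀ _ (huv _).ne']
  calc (∏ i, u i) ^ n⁻¹ + (∏ i, v i) ^ n⁻¹
      = ((∏ i, u i / (u i + v i)) ^ n⁻¹ + (∏ i, v i / (u i + v i)) ^ n⁻¹) *
          (∏ i, (u i + v i)) ^ n⁻¹ := by
        rw [factor u fun i => (hu i).le, factor v fun i => (hv i).le, add_mul]
    _ ≤ ((∑ i, u i / (u i + v i)) / n + (∑ i, v i / (u i + v i)) / n) *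
          (∏ i, (u i + v i)) ^ n⁻¹ := by
        refine mul_le_mul_of_nonneg_right (add_le_add ?_ ?_)
          (Real.rpow_nonneg (prod_nonneg fun i _ => (huv i).le) _)
        · exact amgm _ fun i => div_nonneg (hu i).le (huv i).le
        · exact amgm _ fun i => div_nonneg (hv i).le (huv i).le
    _ = (∏ i, (u i + v i)) ^ n⁻¹ := by
        rw [← add_div, ← sum_add_distrib]
        simp_rw [← add_div, div_self (huv _).ne', sum_const, card_univ, nsmul_one]
        rw [div_self hn.ne', one_mul]

lemma Real.mul_rpow_inv_add_mul_rpow_inv_pow {d : ℕ} (hd : d ≠ 0) {t x y : ℝ} (ht : 0 ≤ t)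
    (hx : 0 ≤ x) (hy : 0 ≤ y) :
    ((t * x) ^ (d⁻¹ : ℝ) + (t * y) ^ (d⁻¹ : ℝ)) ^ d = t * (x ^ (d⁻¹ : ℝ) + y ^ (d⁻¹ : ℝ)) ^ d := by
  rw [Real.mul_rpow ht hx, Real.mul_rpow ht hy, ← mul_add, mul_pow,
    Real.rpow_inv_natCast_pow ht hd]

lemma prod_update_mul_self {ι : Type*} [Fintype ι] [DecidableEq ι] (w : ι → ℝ) (ℓ : ι) (t : ℝ) :
    ∏ i, Function.update w ℓ (t * w ℓ) i = t * ∏ i, w i := by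
  rw [prod_update_of_mem (mem_univ ℓ), ← mul_prod_erase univ w (mem_univ ℓ),
    sdiff_singleton_eq_erase, mul_assoc]

section Grid
variable {d : ℕ} {ε : ℝ}

def icoBox (p w : Fin d → ℝ) : Set (Fin d → ℝ) := univ.pi fun i => Ico (p i) (p i + w i)

lemma volume_icoBox (p : Fin d → ℝ) {w : Fin d → ℝ} (hw : ∀ i, 0 ≤ w i) :
    volume (icoBox p w) = ENNReal.ofReal (∏ i, w i) := by
  rw [icoBox, Real.volume_pi_Ico, ENNReal.ofReal_prod_of_nonneg fun i _ => hw i]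
  simp

lemma icoBox_add_icoBox {p w p' w' : Fin d → ℝ} (hw : ∀ i, 0 < w i) (hw' : ∀ i, 0 < w' i) :
    icoBox p w + icoBox p' w' = icoBox (p + p') (w + w') := by
  rw [icoBox, icoBox, univ_pi_add_univ_pi, icoBox]
  refine pi_congr rfl fun i _ => ?_
  rw [Ico_add_Ico (by linarith [hw i]) (by linarith [hw' i])]
  simp only [Pi.add_apply]
  ring_nf

lemma dist_lt_of_mem_icoBox {p : Fin d → ℝ} {b : ℝ} (hb : 0 < b) {x y : Fin d → ℝ}
    (hx : x ∈ icoBox p fun _ => b) (hy : y ∈ icoBox p fun _ => b) : dist x y < b := by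
  refine (dist_pi_lt_iff hb).2 fun i => ?_
  obtain ⟨hx₁, hx₂⟩ := hx i (mem_univ i)
  obtain ⟨hy₁, hy₂⟩ := hy i (mem_univ i)
  rw [Real.dist_eq, abs_sub_lt_iff]
  constructor <;> linarith

def gridCell (ε : ℝ) (z : Fin d → ℤ) : Set (Fin d → ℝ) := icoBox (fun i => ε * z i) fun _ => ε

noncomputable def gridIndex (ε : ℝ) (x : Fin d → ℝ) : Fin d → ℤ := fun i => ⌊x i / ε⌋

lemma volume_gridCell (hε : 0 ≤ ε) (z : Fin d → ℤ) :
    volume (gridCell ε z) = ENNReal.ofReal (ε ^ d) := by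
  simp [gridCell, volume_icoBox _ fun _ => hε]

lemma mem_gridCell_gridIndex (hε : 0 < ε) (x : Fin d → ℝ) : x ∈ gridCell ε (gridIndex ε x) := by
  intro i _
  have h₁ := Int.floor_le (x i / ε)
  have h₂ := Int.lt_floor_add_one (x i / ε)
  constructor
  · rwa [le_div_iff₀' hε] at h₁
  · rwa [div_lt_iff₀' hε, mul_add_one] at h₂

lemma monotone_gridIndex (hε : 0 < ε) : Monotone (gridIndex (d := d) ε) :=
  fun _ _ h i => Int.floor_le_floor (div_le_div_of_nonneg_right (h i) hε.le)

lemma Bornology.IsBounded.finite_image_gridIndex (hε : 0 < ε) {A : Set (Fin d → ℝ)}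
    (hA : Bornology.IsBounded A) : (gridIndex ε '' A).Finite := by
  obtain ⟨lo, hlo⟩ := hA.bddBelow
  obtain ⟨hi, hhi⟩ := hA.bddAbove
  refine (finite_Icc (gridIndex ε lo) (gridIndex ε hi)).subset ?_
  rintro _ ⟨a, ha, rfl⟩
  exact ⟨monotone_gridIndex hε (hlo ha), monotone_gridIndex hε (hhi ha)⟩

end Grid

section BrunnMinkowski
variable {d : ℕ} {ε : ℝ}

lemma exists_filter_lt_nonempty_and_filter_not_lt_nonempty {Z : Finset (Fin d → ℤ)} (hZ : 1 < #Z) :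
    ∃ ℓ c, {z ∈ Z | z ℓ < c}.Nonempty ∧ {z ∈ Z | ¬ z ℓ < c}.Nonempty := by
  obtain ⟨z, hz, z', hz', hne⟩ := one_lt_card.1 hZ
  obtain ⟨ℓ, hℓ⟩ := Function.ne_iff.1 hne
  rcases hℓ.lt_or_gt with h | h
  · exact ⟨ℓ, z' ℓ, ⟨z, mem_filter.2 ⟨hz, h⟩⟩, ⟨z', mem_filter.2 ⟨hz', lt_irrefl _⟩⟩⟩
  · exact ⟨ℓ, z ℓ, ⟨z', mem_filter.2 ⟨hz', h⟩⟩, ⟨z, mem_filter.2 ⟨hz, lt_irrefl _⟩⟩⟩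

lemma ofReal_le_volume_gridCell_add_icoBox [NeZero d] (hε : 0 < ε) (z : Fin d → ℤ)
    (p : Fin d → ℝ) {w : Fin d → ℝ} (hw : ∀ i, 0 < w i) :
    ENNReal.ofReal (((ε ^ d) ^ (d⁻¹ : ℝ) + (∏ i, w i) ^ (d⁻¹ : ℝ)) ^ d) ≤
      volume (gridCell ε z + icoBox p w) := by
  rw [gridCell, icoBox_add_icoBox (fun _ => hε) hw,
    volume_icoBox _ (w := (fun _ => ε) + w) fun i => (add_pos hε (hw i)).le]
  simp only [Pi.add_apply]
  refine ENNReal.ofReal_le_ofReal ?_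
  have h := Real.prod_rpow_inv_add_prod_rpow_inv_le (u := fun _ : Fin d => ε) (fun _ => hε) hw
  simp only [prod_const, card_univ, Fintype.card_fin] at h
  calc ((ε ^ d) ^ (d⁻¹ : ℝ) + (∏ i, w i) ^ (d⁻¹ : ℝ)) ^ d
      ≤ ((∏ i, (ε + w i)) ^ (d⁻¹ : ℝ)) ^ d :=
        pow_le_pow_left₀ (add_nonneg (by positivity)
          (Real.rpow_nonneg (prod_nonneg fun i _ => (hw i).le) _)) h d
    _ = ∏ i, (ε + w i) :=
        Real.rpow_inv_natCast_pow (prod_nonneg fun i _ => (add_pos hε (hw i)).le) (NeZero.ne d)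

lemma biUnion_filter_lt_add_icoBox_subset (hε : 0 ≤ ε) (Z : Finset (Fin d → ℤ)) (ℓ : Fin d)
    (c : ℤ) (p w : Fin d → ℝ) {t : ℝ} (ht : t ≤ w ℓ) :
    (⋃ z ∈ {z ∈ Z | z ℓ < c}, gridCell ε z) + icoBox p (Function.update w ℓ t) ⊆
      ((⋃ z ∈ Z, gridCell ε z) + icoBox p w) ∩ {x | x ℓ < ε * c + (p ℓ + t)} := by
  rintro _ ⟨u, hu, v, hv, rfl⟩
  simp only [mem_iUnion, mem_filter, exists_prop] at hu
  obtain ⟨z, ⟨hzZ, hzc⟩, hu⟩ := hu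
  refine ⟨⟨u, mem_biUnion hzZ hu, v, fun i _ => ?_, rfl⟩, ?_⟩
  · obtain ⟨hv₁, hv₂⟩ := hv i (mem_univ i)
    rcases eq_or_ne i ℓ with rfl | hi
    · rw [Function.update_self] at hv₂
      exact ⟨hv₁, by linarith⟩
    · rw [Function.update_of_ne hi] at hv₂
      exact ⟨hv₁, hv₂⟩
  · have hu₂ := (hu ℓ (mem_univ ℓ)).2
    have hv₂ := (hv ℓ (mem_univ ℓ)).2
    have hzc' : ε * (z ℓ + 1) ≤ ε * c :=
      mul_le_mul_of_nonneg_left (by exact_mod_cast hzc) hε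
    rw [Function.update_self] at hv₂
    simp only [mem_ofPred_eq, Pi.add_apply]
    linarith

lemma biUnion_filter_not_lt_add_icoBox_subset (hε : 0 ≤ ε) (Z : Finset (Fin d → ℤ))
    (ℓ : Fin d) (c : ℤ) (p w : Fin d → ℝ) {t s : ℝ} (ht : 0 ≤ t) (hts : t + s ≤ w ℓ) :
    (⋃ z ∈ {z ∈ Z | ¬ z ℓ < c}, gridCell ε z) +
        icoBox (Function.update p ℓ (p ℓ + t)) (Function.update w ℓ s) ⊆
      ((⋃ z ∈ Z, gridCell ε z) + icoBox p w) \ {x | x ℓ < ε * c + (p ℓ + t)} := by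
  rintro _ ⟨u, hu, v, hv, rfl⟩
  simp only [mem_iUnion, mem_filter, exists_prop, not_lt] at hu
  obtain ⟨z, ⟨hzZ, hzc⟩, hu⟩ := hu
  refine ⟨⟨u, mem_biUnion hzZ hu, v, fun i _ => ?_, rfl⟩, ?_⟩
  · obtain ⟨hv₁, hv₂⟩ := hv i (mem_univ i)
    rcases eq_or_ne i ℓ with rfl | hi
    · simp only [Function.update_self] at hv₁ hv₂
      exact ⟨by linarith, by linarith⟩
    · simp only [Function.update_of_ne hi] at hv₁ hv₂
      exact ⟨hv₁, hv₂⟩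
  · have hu₁ := (hu ℓ (mem_univ ℓ)).1
    have hv₁ := (hv ℓ (mem_univ ℓ)).1
    have hzc' : ε * c ≤ ε * z ℓ := mul_le_mul_of_nonneg_left (by exact_mod_cast hzc) hε
    rw [Function.update_self] at hv₁
    simp only [mem_ofPred_eq, Pi.add_apply, not_lt]
    linarith

lemma measure_add_measure_le_of_subset_inter_of_subset_diff {α : Type*} [MeasurableSpace α]
    (μ : Measure α) {S S₁ S₂ H : Set α} (hH : MeasurableSet H) (h₁ : S₁ ⊆ S ∩ H)
    (h₂ : S₂ ⊆ S \ H) : μ S₁ + μ S₂ ≤ μ S :=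
  (add_le_add (measure_mono h₁) (measure_mono h₂)).trans_eq (measure_inter_add_sdiff S hH)

lemma update_mul_self_pos {ι : Type*} [DecidableEq ι] {w : ι → ℝ} (hw : ∀ i, 0 < w i) (ℓ : ι)
    {t : ℝ} (ht : 0 < t) (i : ι) : 0 < Function.update w ℓ (t * w ℓ) i := by
  rcases eq_or_ne i ℓ with rfl | hi
  · rw [Function.update_self]
    exact mul_pos ht (hw i)
  · rw [Function.update_of_ne hi]
    exact hw i

/-- Brunn–Minkowski for a union `D` of grid cells and a box `K`; `#Z * ε ^ d` is `vol D`, the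
cells being disjoint. -/
theorem ofReal_le_volume_biUnion_gridCell_add_icoBox [NeZero d] (hε : 0 < ε)
    (Z : Finset (Fin d → ℤ)) (hZ : Z.Nonempty) (p : Fin d → ℝ) {w : Fin d → ℝ}
    (hw : ∀ i, 0 < w i) :
    ENNReal.ofReal (((#Z * ε ^ d) ^ (d⁻¹ : ℝ) + (∏ i, w i) ^ (d⁻¹ : ℝ)) ^ d) ≤
      volume ((⋃ z ∈ Z, gridCell ε z) + icoBox p w) := by
  induction Z using Finset.strongInduction generalizing p w with
  | H Z ih =>
  rcases (one_le_card.2 hZ).eq_or_lt with h1 | h1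
  · obtain ⟨z, rfl⟩ := card_eq_one.1 h1.symm
    simpa using ofReal_le_volume_gridCell_add_icoBox hε z p hw
  -- Cut along a grid hyperplane and split the box in the same volume ratio `θ`.
  obtain ⟨ℓ, c, hZ₁, hZ₂⟩ := exists_filter_lt_nonempty_and_filter_not_lt_nonempty h1
  have hZ₁Z : {z ∈ Z | z ℓ < c} ⊂ Z := filter_ssubset.2 <|
    let ⟨z, hz⟩ := hZ₂; ⟨z, mem_filter.1 hz⟩
  have hZ₂Z : {z ∈ Z | ¬ z ℓ < c} ⊂ Z := filter_ssubset.2 <|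
    let ⟨z, hz⟩ := hZ₁; ⟨z, (mem_filter.1 hz).1, not_not_intro (mem_filter.1 hz).2⟩
  have hZpos : (0 : ℝ) < #Z := by exact_mod_cast hZ.card_pos
  set θ : ℝ := #{z ∈ Z | z ℓ < c} / #Z
  have hθ₁ : (#{z ∈ Z | z ℓ < c} : ℝ) = θ * #Z := (div_mul_cancel₀ _ hZpos.ne').symm
  have hθ₂ : (#{z ∈ Z | ¬ z ℓ < c} : ℝ) = (1 - θ) * #Z := by
    rw [sub_mul, ← hθ₁, one_mul, eq_sub_iff_add_eq, add_comm]
    exact_mod_cast card_filter_add_card_filter_not (s := Z) (fun z => z ℓ < c)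
  have hθ_pos : 0 < θ := div_pos (by exact_mod_cast hZ₁.card_pos) hZpos
  have hθ_lt : θ < 1 := by
    have : (0 : ℝ) < #{z ∈ Z | ¬ z ℓ < c} := by exact_mod_cast hZ₂.card_pos
    nlinarith
  set X := ((#Z * ε ^ d) ^ (d⁻¹ : ℝ) + (∏ i, w i) ^ (d⁻¹ : ℝ)) ^ d
  have hscale (t : ℝ) (ht : 0 ≤ t) :
      ((t * #Z * ε ^ d) ^ (d⁻¹ : ℝ) + (∏ i, Function.update w ℓ (t * w ℓ) i) ^ (d⁻¹ : ℝ)) ^ d =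
        t * X := by
    rw [prod_update_mul_self, mul_assoc, Real.mul_rpow_inv_add_mul_rpow_inv_pow (NeZero.ne d) ht
      (mul_nonneg hZpos.le (pow_nonneg hε.le d)) (prod_nonneg fun i _ => (hw i).le)]
  have ih₁ := ih _ hZ₁Z hZ₁ p (update_mul_self_pos hw ℓ hθ_pos)
  have ih₂ := ih _ hZ₂Z hZ₂ (Function.update p ℓ (p ℓ + θ * w ℓ))
    (update_mul_self_pos hw ℓ (sub_pos.2 hθ_lt))
  rw [hθ₁, hscale θ hθ_pos.le] at ih₁
  rw [hθ₂, hscale (1 - θ) (sub_pos.2 hθ_lt).le] at ih₂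
  calc ENNReal.ofReal X = ENNReal.ofReal (θ * X + (1 - θ) * X) := by ring_nf
    _ ≤ ENNReal.ofReal (θ * X) + ENNReal.ofReal ((1 - θ) * X) := ENNReal.ofReal_add_le
    _ ≤ _ := add_le_add ih₁ ih₂
    _ ≤ _ := measure_add_measure_le_of_subset_inter_of_subset_diff volume
        (measurableSet_lt (measurable_pi_apply ℓ) measurable_const)
        (biUnion_filter_lt_add_icoBox_subset hε.le Z ℓ c p w (by nlinarith [hw ℓ]))
        (biUnion_filter_not_lt_add_icoBox_subset hε.le Z ℓ c p w (by nlinarith [hw ℓ])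
          (by linarith))

end BrunnMinkowski

lemma one_add_pow_mul_le_rpow_inv_add_pow {d : ℕ} (hd : d ≠ 0) {v N b : ℝ} (hv₀ : 0 ≤ v)
    (hv₁ : v ≤ 1) (hvN : v ≤ N) (hb : 0 ≤ b) :
    (1 + b) ^ d * v ≤ (N ^ (d⁻¹ : ℝ) + b) ^ d := by
  have hr₀ : 0 ≤ v ^ (d⁻¹ : ℝ) := Real.rpow_nonneg hv₀ _
  have hr₁ : v ^ (d⁻¹ : ℝ) ≤ 1 := Real.rpow_le_one hv₀ hv₁ (by positivity)
  calc (1 + b) ^ d * v = ((1 + b) * v ^ (d⁻¹ : ℝ)) ^ d := by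
        rw [mul_pow, Real.rpow_inv_natCast_pow hv₀ hd]
    _ ≤ (N ^ (d⁻¹ : ℝ) + b) ^ d := by
        gcongr
        have := Real.rpow_le_rpow hv₀ hvN (by positivity : (0 : ℝ) ≤ (d : ℝ)⁻¹)
        nlinarith

theorem ofReal_one_add_pow_mul_volume_le {d : ℕ} [NeZero d] {A : Set (Fin d → ℝ)}
    (hA : Bornology.IsBounded A) (hA₁ : volume A ≤ 1) {ε b : ℝ} (hε : 0 < ε) (hb : 0 < b) :
    ENNReal.ofReal ((1 + b) ^ d) * volume A ≤ volume (thickening ε A + icoBox 0 fun _ => b) := by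
  rcases A.eq_empty_or_nonempty with rfl | hne
  · simp
  set Z := (hA.finite_image_gridIndex hε).toFinset
  have hZ : Z.Nonempty := by simpa [Z] using hne
  have hAZ : A ⊆ ⋃ z ∈ Z, gridCell ε z := fun a ha =>
    mem_biUnion (by simpa [Z] using ⟨a, ha, rfl⟩) (mem_gridCell_gridIndex hε a)
  have hZA : ⋃ z ∈ Z, gridCell ε z ⊆ thickening ε A := by
    simp only [iUnion_subset_iff, Z, Finite.mem_toFinset]
    rintro _ ⟨a, ha, rfl⟩ x hx
    exact mem_thickening_iff.2 ⟨a, ha, dist_lt_of_mem_icoBox hε hx (mem_gridCell_gridIndex hε a)⟩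
  have hAfin : volume A ≠ ⊤ := ne_top_of_le_ne_top ENNReal.one_ne_top hA₁
  have hvZ : volume A ≤ ENNReal.ofReal (#Z * ε ^ d) := calc
    volume A ≤ volume (⋃ z ∈ Z, gridCell ε z) := measure_mono hAZ
    _ ≤ ∑ z ∈ Z, volume (gridCell ε z) := measure_biUnion_finset_le Z _
    _ = ENNReal.ofReal (#Z * ε ^ d) := by
        simp [volume_gridCell hε.le, ENNReal.ofReal_mul]
  have hBM := ofReal_le_volume_biUnion_gridCell_add_icoBox hε Z hZ 0 fun _ => hb
  rw [prod_const, card_univ, Fintype.card_fin,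
    Real.pow_rpow_inv_natCast hb.le (NeZero.ne d)] at hBM
  calc ENNReal.ofReal ((1 + b) ^ d) * volume A
      = ENNReal.ofReal ((1 + b) ^ d * (volume A).toReal) := by
        rw [ENNReal.ofReal_mul (by positivity), ENNReal.ofReal_toReal hAfin]
    _ ≤ ENNReal.ofReal (((#Z * ε ^ d) ^ (d⁻¹ : ℝ) + b) ^ d) := by
        refine ENNReal.ofReal_le_ofReal (one_add_pow_mul_le_rpow_inv_add_pow (NeZero.ne d)
          ENNReal.toReal_nonneg ?_ ?_ hb.le)
        · simpa using ENNReal.toReal_mono ENNReal.one_ne_top hA₁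
        · exact ENNReal.toReal_le_of_le_ofReal (by positivity) hvZ
    _ ≤ volume ((⋃ z ∈ Z, gridCell ε z) + icoBox 0 fun _ => b) := hBM
    _ ≤ volume (thickening ε A + icoBox 0 fun _ => b) := measure_mono (add_subset_add_right hZA)

lemma disjoint_thickening_add_thickening_add {E : Type*} [SeminormedAddCommGroup E]
    {A A' K : Set E} {ε b : ℝ} (hK : ∀ v ∈ K, ∀ v' ∈ K, dist v v' < b)
    (hAA' : ∀ a ∈ A, ∀ a' ∈ A', b + 2 * ε ≤ dist a a') :
    Disjoint (thickening ε A + K) (thickening ε A' + K) := by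
  rw [Set.disjoint_left]
  rintro _ ⟨u, hu, v, hv, rfl⟩ ⟨u', hu', v', hv', huv⟩
  obtain ⟨a, ha, hua⟩ := mem_thickening_iff.1 hu
  obtain ⟨a', ha', hua'⟩ := mem_thickening_iff.1 hu'
  have huu' : dist u u' = dist v' v := by
    simp only at huv
    rw [dist_eq_norm, dist_eq_norm, (sub_eq_sub_iff_add_eq_add.2 (huv.symm.trans (add_comm _ _)))]
  have := dist_triangle4 a u u' a'
  linarith [hAA' a ha a' ha', hK v' hv' v hv, dist_comm a u]

lemma sum_measure_le_card_mul_measure {α ι κ : Type*} [MeasurableSpace α] [Fintype κ]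
    (μ : Measure α) (F : Finset ι) {S : ι → Set α} {U : Set α} (color : ι → κ)
    (hS : ∀ i, MeasurableSet (S i)) (hSU : ∀ i, S i ⊆ U)
    (hdisj : ∀ i j, i ≠ j → color i = color j → Disjoint (S i) (S j)) :
    ∑ i ∈ F, μ (S i) ≤ Fintype.card κ * μ U := by
  classical
  rw [← sum_fiberwise F color, ← nsmul_eq_mul, ← card_univ, ← sum_const]
  refine sum_le_sum fun k _ => ?_
  rw [← measure_biUnion_finset (fun i hi j hj hij => hdisj i j hij
      (((mem_filter.1 hi).2).trans (mem_filter.1 hj).2.symm)) fun i _ => hS i]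
  exact measure_mono (iUnion₂_subset fun i _ => hSU i)

lemma le_of_forall_nat_mul_pow_le {a k C : ℝ} {d : ℕ}
    (h : ∀ n : ℕ, a * n ^ d ≤ k * (n + C) ^ d) : a ≤ k := by
  have hlim : Tendsto (fun n : ℕ => k * (1 + C / n) ^ d) atTop (𝓝 k) := by
    simpa using (((tendsto_const_div_atTop_nhds_zero_nat C).const_add 1).pow d).const_mul k
  refine ge_of_tendsto hlim (eventually_atTop.2 ⟨1, fun n hn => ?_⟩)
  have hn : (0 : ℝ) < n := by exact_mod_cast hn
  have := h n
  rw [show (n : ℝ) + C = n * (1 + C / n) by field_simp, mul_pow] at this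
  refine le_of_mul_le_mul_right ?_ (pow_pos hn d)
  linarith

section Packing
variable {d : ℕ} {ι κ : Type*} [Fintype κ] {T : ι → Set (Fin d → ℝ)}

lemma thickening_add_icoBox_subset_Icc {A : Set (Fin d → ℝ)} {lo hi ε b : ℝ}
    (hA : A ⊆ Icc (fun _ => lo) fun _ => hi) :
    thickening ε A + (icoBox 0 fun _ => b) ⊆ Icc (fun _ => lo - ε) fun _ => hi + ε + b := by
  rintro _ ⟨u, hu, v, hv, rfl⟩
  obtain ⟨a, ha, hua⟩ := mem_thickening_iff.1 hu
  obtain ⟨ha₁, ha₂⟩ := hA ha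
  refine ⟨fun k => ?_, fun k => ?_⟩ <;>
  · have hk := abs_sub_lt_iff.1 (((Real.dist_eq _ _).symm.trans_le
      (dist_le_pi_dist u a k)).trans_lt hua)
    have hak : lo ≤ a k ∧ a k ≤ hi := ⟨ha₁ k, ha₂ k⟩
    have hvk := hv k (mem_univ k)
    simp only [Pi.zero_apply, zero_add, Set.mem_Ico] at hvk
    simp only [Pi.add_apply]
    linarith

theorem one_add_pow_mul_pow_le_card_mul [NeZero d] (color : ι → κ)
    (hT_bdd : ∀ i, Bornology.IsBounded (T i)) (hT_vol : ∀ i, volume (T i) ≤ 1)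
    (hcover : ∀ x, ∃ i, x ∈ T i)
    (hlocfin : ∀ R : ℝ, {i | (T i ∩ closedBall 0 R).Nonempty}.Finite)
    {ε b : ℝ} (hε : 0 < ε) (hb : 0 < b)
    (hsep : ∀ i j, i ≠ j → color i = color j → ∀ x ∈ T i, ∀ y ∈ T j, b + 2 * ε ≤ dist x y)
    (n : ℕ) :
    (1 + b) ^ d * n ^ d ≤ Fintype.card κ * (n + (2 * ε + b)) ^ d := by
  set Q : Set (Fin d → ℝ) := Icc (fun _ => 0) fun _ => (n : ℝ)
  set Q' : Set (Fin d → ℝ) := Icc (fun _ => 0 - ε) fun _ => n + ε + b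
  set A := fun i => T i ∩ Q
  set S := fun i => thickening ε (A i) + icoBox 0 fun _ => b
  set F := (hlocfin n).toFinset
  have hQF : Q ⊆ ⋃ i ∈ F, A i := by
    intro x hx
    obtain ⟨i, hi⟩ := hcover x
    have hxR : x ∈ closedBall (0 : Fin d → ℝ) n := by
      rw [mem_closedBall, dist_zero_right, pi_norm_le_iff_of_nonneg (Nat.cast_nonneg n)]
      intro k
      rw [Real.norm_of_nonneg (hx.1 k)]
      exact hx.2 k
    exact mem_biUnion ((hlocfin n).mem_toFinset.2 ⟨x, hi, hxR⟩) ⟨hi, hx⟩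
  have hSQ' i : S i ⊆ Q' := thickening_add_icoBox_subset_Icc Set.inter_subset_right
  have hS i : MeasurableSet (S i) := isOpen_thickening.add_right.measurableSet
  have hdisj i j (hij : i ≠ j) (hc : color i = color j) : Disjoint (S i) (S j) :=
    disjoint_thickening_add_thickening_add (fun _ hv _ hv' => dist_lt_of_mem_icoBox hb hv hv')
      fun a ha a' ha' => hsep i j hij hc a ha.1 a' ha'.1
  have key : ENNReal.ofReal ((1 + b) ^ d) * volume Q ≤ Fintype.card κ * volume Q' := calc
    _ ≤ ENNReal.ofReal ((1 + b) ^ d) * ∑ i ∈ F, volume (A i) := by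
        gcongr
        exact (measure_mono hQF).trans (measure_biUnion_finset_le F A)
    _ = ∑ i ∈ F, ENNReal.ofReal ((1 + b) ^ d) * volume (A i) := mul_sum ..
    _ ≤ ∑ i ∈ F, volume (S i) := sum_le_sum fun i _ =>
        ofReal_one_add_pow_mul_volume_le ((hT_bdd i).subset Set.inter_subset_left)
          ((measure_mono Set.inter_subset_left).trans (hT_vol i)) hε hb
    _ ≤ _ := sum_measure_le_card_mul_measure volume F color hS hSQ' hdisj
  have hQ' : (n : ℝ) + ε + b - (0 - ε) = n + (2 * ε + b) := by ring
  simp only [Q, Q', Real.volume_Icc_pi, sub_zero, hQ', prod_const, card_univ,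
    Fintype.card_fin] at key
  rwa [← ENNReal.ofReal_pow (by positivity), ← ENNReal.ofReal_pow (by positivity),
    ← ENNReal.ofReal_mul (by positivity), ← ENNReal.ofReal_natCast,
    ← ENNReal.ofReal_mul (by positivity), ENNReal.ofReal_le_ofReal_iff (by positivity)] at key

theorem one_add_pow_le_card [NeZero d] (color : ι → κ)
    (hT_bdd : ∀ i, Bornology.IsBounded (T i)) (hT_vol : ∀ i, volume (T i) ≤ 1)
    (hcover : ∀ x, ∃ i, x ∈ T i)
    (hlocfin : ∀ R : ℝ, {i | (T i ∩ closedBall 0 R).Nonempty}.Finite)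
    {s b : ℝ} (hb : 0 < b) (hbs : b < s)
    (hsep : ∀ i j, i ≠ j → color i = color j → ∀ x ∈ T i, ∀ y ∈ T j, s ≤ dist x y) :
    (1 + b) ^ d ≤ Fintype.card κ :=
  le_of_forall_nat_mul_pow_le <| one_add_pow_mul_pow_le_card_mul color hT_bdd hT_vol hcover
    hlocfin (ε := (s - b) / 2) (by linarith) hb fun i j hij hc x hx y hy => by
      linarith [hsep i j hij hc x hx y hy]

end Packing

lemma sub_one_le_dist_of_cubeColor_eq {d m : ℕ} {z z' : Fin d → ℤ} (hne : z ≠ z')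
    (hc : cubeColor d m z = cubeColor d m z') {x y : Fin d → ℝ} (hx : x ∈ intUnitCube d z)
    (hy : y ∈ intUnitCube d z') : (m : ℝ) - 1 ≤ dist x y := by
  obtain ⟨i, hi⟩ := Function.ne_iff.1 hne
  have hdvd : (m : ℤ) ∣ z' i - z i :=
    (ZMod.intCast_eq_intCast_iff_dvd_sub _ _ _).1 (congrFun hc i)
  have hm : (m : ℝ) ≤ |(z' i : ℝ) - z i| := by
    exact_mod_cast Int.le_of_dvd (abs_pos.2 (sub_ne_zero.2 (Ne.symm hi))) ((dvd_abs _ _).2 hdvd)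
  obtain ⟨hx₁, hx₂⟩ := hx i
  obtain ⟨hy₁, hy₂⟩ := hy i
  calc (m : ℝ) - 1 ≤ |x i - y i| := by
        rcases abs_cases ((z' i : ℝ) - z i) with ⟨h, h₀⟩ | ⟨h, h₀⟩ <;>
        rcases abs_cases (x i - y i) with ⟨h', h₀'⟩ | ⟨h', h₀'⟩ <;> linarith
    _ = dist (x i) (y i) := (Real.dist_eq _ _).symm
    _ ≤ dist x y := dist_le_pi_dist x y i

theorem isLeast_dist_of_cubeColor_eq {d m : ℕ} [NeZero d] (hm : 1 ≤ m) :
    IsLeast {t : ℝ | ∃ z z' : Fin d → ℤ, z ≠ z' ∧ cubeColor d m z = cubeColor d m z' ∧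
        ∃ x ∈ intUnitCube d z, ∃ y ∈ intUnitCube d z', t = dist x y} ((m : ℝ) - 1) := by
  have hm' : (1 : ℝ) ≤ m := by exact_mod_cast hm
  refine ⟨⟨0, fun _ => m, fun h => ?_, funext fun i => ?_, fun _ => 1, fun i => ?_,
    fun _ => m, fun i => ?_, ?_⟩, ?_⟩
  · have := congrFun h 0
    simp only [Pi.zero_apply] at this
    omega
  · simp [cubeColor]
  · simp
  · simp
  · rw [dist_pi_const, Real.dist_eq, abs_sub_comm, abs_of_nonneg (by linarith)]
  · rintro t ⟨z, z', hne, hc, x, hx, y, hy, rfl⟩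
    exact sub_one_le_dist_of_cubeColor_eq hne hc hx hy

/-- For the L∞ metric in ℝ^d with k = m^d colors (m ≥ 2), the periodic
unit-cube tiling colored with period m in each coordinate achieves minimal L∞ distance
m−1 between same-colored points in different tiles (hence L∞ fault tolerance (m−1)/2);
moreover, no tiling of ℝ^d with m^d colors and tiles of volume at most 1 achieves L∞
fault tolerance greater than (m−1)/2. -/
theorem stmt_19 (d m : ℕ) (hd : 0 < d) (hm : 2 ≤ m) :
    (IsLeast {t : ℝ | ∃ z z' : Fin d → ℤ, z ≠ z' ∧ cubeColor d m z = cubeColor d m z' ∧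
        ∃ x ∈ intUnitCube d z, ∃ y ∈ intUnitCube d z', t = dist x y} ((m : ℝ) - 1)) ∧
    (∀ (ι : Type) (T : ι → Set (Fin d → ℝ)) (color : ι → Fin (m ^ d)) (r : ℝ),
      (∀ i, MeasurableSet (T i)) →
      (∀ i, IsClosed (T i)) →
      (∀ i, Bornology.IsBounded (T i)) →
      (∀ i, volume (T i) ≤ 1) →
      (∀ x : Fin d → ℝ, ∃ i, x ∈ T i) →
      (∀ i j, i ≠ j → Disjoint (interior (T i)) (interior (T j))) →
      (∀ R : ℝ, {i | (T i ∩ Metric.closedBall 0 R).Nonempty}.Finite) →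
      (∀ i j, i ≠ j → color i = color j →
        ∀ x ∈ T i, ∀ y ∈ T j, 2 * r ≤ dist x y) →
      r ≤ ((m : ℝ) - 1) / 2) := by
  have : NeZero d := ⟨hd.ne'⟩
  refine ⟨isLeast_dist_of_cubeColor_eq (by omega),
    fun ι T color r _ _ hT_bdd hT_vol hcover _ hlocfin hsep => ?_⟩
  by_contra! hr
  have hm' : (2 : ℝ) ≤ m := by exact_mod_cast hm
  -- any `b` with `m - 1 < b < 2 * r` contradicts the packing bound `(1 + b) ^ d ≤ m ^ d`
  have h := one_add_pow_le_card color hT_bdd hT_vol hcover hlocfin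
    (b := r + (m - 1) / 2) (by linarith) (by linarith) hsep
  rw [Fintype.card_fin, Nat.cast_pow, pow_le_pow_iff_left₀ (by linarith) (by linarith) hd.ne'] at h
  linarith
end
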